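/- arXiv:2209.02593 — 5 statements merged into one kernel-verified Lean document; each statement's English description precedes it below -/
import Mathlib

section
/- Let W ⊆ ℝ be countable, enumerated as W = {w_n : n ∈ ℕ}. Define a strategy for Bob in the Baker game where in round n, given that the current interval of legal numbers is (a, b), Bob plays w_n if a < w_n < b, and otherwise plays any legal number, e.g. (a+b)/2. Then for every play of the game (sequences (a_n) strictly increasing and (b_n) strictly decreasing with a_n < b_m for all n, m, consistent with this strategy), for every w ∈ W there exists n with w ≤ a_n or w ≥ b_n. -/
/-- Bob's enumeration coding strategy defeats every countable payoff set: in any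
play consistent with it, every w ∈ W is eventually eliminated. -/
theorem enumeration_strategy_wins (W : Set ℝ) (w : ℕ → ℝ) (hW : W ⊆ Set.range w)
    (a b : ℕ → ℝ) (ha : StrictMono a) (hb : StrictAnti b)
    (hab : ∀ n m, a n < b m)
    (h0 : a 0 < w 0 → b 0 = w 0)
    (hstep : ∀ n, a (n + 1) < w (n + 1) → w (n + 1) < b n → b (n + 1) = w (n + 1)) :
    ∀ x ∈ W, ∃ n, x ≤ a n ∨ b n ≤ x := by
  intro x hx
  obtain ⟨n, rfl⟩ := hW hx
  cases n with
  | zero =>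
    rcases le_or_gt (w 0) (a 0) with h | h
    · exact ⟨0, Or.inl h⟩
    · exact ⟨0, Or.inr (h0 h).le⟩
  | succ n =>
    rcases le_or_gt (w (n + 1)) (a (n + 1)) with h | h
    · exact ⟨n + 1, Or.inl h⟩
    rcases le_or_gt (b n) (w (n + 1)) with h2 | h2
    · exact ⟨n, Or.inr h2⟩
    · exact ⟨n + 1, Or.inr (hstep n h h2).le⟩
end

section
/- Let σ : ℝ × ℝ → ℝ be a coding strategy for Bob such that σ(β, a) ∈ ℚ and a < σ(β,a) < β whenever a < β. Then there exists a countable set E ⊆ ℝ such that for every x ∉ E, for all reals α < x < β with β ∈ ℚ ∪ {∞}, there exists a with α < a < x and x < σ(β, a). -/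
/-- For any rational-valued legal coding strategy of Bob (σ₀ for the first move,
σ thereafter), there is a countable set E such that any x outside E can be kept
legal by Alice from any position. -/
theorem coding_strategy_countable_elimination
    (σ : ℝ × ℝ → ℝ) (σ₀ : ℝ → ℝ)
    (hσQ : ∀ β a : ℝ, a < β → ∃ r : ℚ, σ (β, a) = (r : ℝ))
    (hσ : ∀ β a : ℝ, a < β → a < σ (β, a) ∧ σ (β, a) < β)
    (hσ₀Q : ∀ a : ℝ, ∃ r : ℚ, σ₀ a = (r : ℝ))
    (hσ₀ : ∀ a : ℝ, a < σ₀ a) :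
    ∃ E : Set ℝ, E.Countable ∧ ∀ x : ℝ, x ∉ E →
      (∀ α : ℝ, ∀ β : ℚ, α < x → x < (β : ℝ) →
        ∃ a : ℝ, α < a ∧ a < x ∧ x < σ ((β : ℝ), a)) ∧
      (∀ α : ℝ, α < x → ∃ a : ℝ, α < a ∧ a < x ∧ x < σ₀ a) := by
  classical
  set S1 : ℚ × ℚ → Set ℝ := fun p =>
    {x | (p.1 : ℝ) < x ∧ x < (p.2 : ℝ) ∧
      ∀ a : ℝ, (p.1 : ℝ) < a → a < x → σ ((p.2 : ℝ), a) ≤ x} with hS1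
  set S0 : ℚ → Set ℝ := fun r =>
    {x | (r : ℝ) < x ∧ ∀ a : ℝ, (r : ℝ) < a → a < x → σ₀ a ≤ x} with hS0
  refine ⟨(⋃ p : ℚ × ℚ, S1 p) ∪ (⋃ r : ℚ, S0 r), ?_, ?_⟩
  · refine Set.Countable.union (Set.countable_iUnion ?_) (Set.countable_iUnion ?_)
    · intro p
      refine Set.MapsTo.countable_of_injOn (t := Set.range ((↑) : ℚ → ℝ))
        (f := fun x => σ ((p.2 : ℝ), x)) ?_ ?_ (Set.countable_range _)
      · intro x hx
        obtain ⟨r, hr⟩ := hσQ (p.2 : ℝ) x hx.2.1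
        exact ⟨r, hr.symm⟩
      · intro x hx y hy hxy
        dsimp only at hxy
        by_contra hne
        rcases lt_or_gt_of_ne hne with h | h
        · have h1 : σ ((p.2 : ℝ), x) ≤ y := hy.2.2 x hx.1 h
          have h2 : y < σ ((p.2 : ℝ), y) := (hσ _ y hy.2.1).1
          rw [hxy] at h1; exact absurd h1 (not_le.mpr h2)
        · have h1 : σ ((p.2 : ℝ), y) ≤ x := hx.2.2 y hy.1 h
          have h2 : x < σ ((p.2 : ℝ), x) := (hσ _ x hx.2.1).1
          rw [hxy] at h2; exact absurd h1 (not_le.mpr h2)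
    · intro r
      refine Set.MapsTo.countable_of_injOn (t := Set.range ((↑) : ℚ → ℝ))
        (f := fun x => σ₀ x) ?_ ?_ (Set.countable_range _)
      · intro x _
        obtain ⟨q, hq⟩ := hσ₀Q x
        exact ⟨q, hq.symm⟩
      · intro x hx y hy hxy
        dsimp only at hxy
        by_contra hne
        rcases lt_or_gt_of_ne hne with h | h
        · have h1 : σ₀ x ≤ y := hy.2 x hx.1 h
          rw [hxy] at h1; exact absurd h1 (not_le.mpr (hσ₀ y))
        · have h1 : σ₀ y ≤ x := hx.2 y hy.1 h
          rw [← hxy] at h1; exact absurd h1 (not_le.mpr (hσ₀ x))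
  · intro x hx
    have hx1 : ∀ p : ℚ × ℚ, x ∉ S1 p := fun p hp =>
      hx (Set.mem_union_left _ (Set.mem_iUnion.mpr ⟨p, hp⟩))
    have hx0 : ∀ r : ℚ, x ∉ S0 r := fun r hr =>
      hx (Set.mem_union_right _ (Set.mem_iUnion.mpr ⟨r, hr⟩))
    constructor
    · intro α β hα hβ
      obtain ⟨r, hr1, hr2⟩ := exists_rat_btwn hα
      have := hx1 (r, β)
      simp only [hS1, Set.mem_setOf_eq] at this
      push_neg at this
      obtain ⟨a, ha1, ha2, ha3⟩ := this hr2 hβ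
      exact ⟨a, lt_trans hr1 ha1, ha2, lt_of_not_ge fun h => absurd h (not_le.mpr ha3)⟩
    · intro α hα
      obtain ⟨r, hr1, hr2⟩ := exists_rat_btwn hα
      have := hx0 r
      simp only [hS0, Set.mem_setOf_eq] at this
      push_neg at this
      obtain ⟨a, ha1, ha2, ha3⟩ := this hr2
      exact ⟨a, lt_trans hr1 ha1, ha2, ha3⟩
end

section
/- If Bob has a winning coding strategy in the Baker game with payoff set W ⊆ ℝ, where the strategy plays only rational numbers, then W is countable. Formally: let σ : (ℚ ∪ {∞}) × ℝ → ℚ satisfy a < σ(β, a) < β whenever a < β. Suppose W is uncountable. Then there exist x ∈ W and a sequence (a_n) of reals, strictly increasing, such that for all n, a_n < x < σ(β_n, a_n) where β_0 = ∞ and β_{n+1} = σ(β_n, a_n). That is, Alice has a counter-play keeping x legal forever. -/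
lemma K_countable (g : ℝ → ℚ) (c : ℝ) :
    {x : ℝ | c < x ∧ x < (g x : ℝ) ∧ ∀ a : ℝ, c < a → a < x → (g a : ℝ) ≤ x}.Countable := by
  set K := {x : ℝ | c < x ∧ x < (g x : ℝ) ∧ ∀ a : ℝ, c < a → a < x → (g a : ℝ) ≤ x} with hK
  have hmono : ∀ x ∈ K, ∀ y ∈ K, x < y → (g x : ℝ) < (g y : ℝ) := by
    intro x hx y hy hxy
    exact lt_of_le_of_lt (hy.2.2 x hx.1 hxy) hy.2.1
  rw [Set.countable_iff_exists_injOn]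
  refine ⟨fun x => Encodable.encode (g x), ?_⟩
  intro x hx y hy hxy
  rcases lt_trichotomy x y with h | h | h
  · have := hmono x hx y hy h
    have : g x ≠ g y := by exact_mod_cast this.ne
    exact absurd (Encodable.encode_injective hxy) this
  · exact h
  · have := hmono y hy x hx h
    have : g y ≠ g x := by exact_mod_cast this.ne
    exact absurd (Encodable.encode_injective hxy).symm this

/-- If Bob plays a rational-valued coding strategy (σ₀ for the first round, σ
thereafter, always legal) and W is uncountable, then Alice has a counter-play
keeping some x ∈ W legal forever. -/
theorem uncountable_defeats_coding_strategy
    (σ₀ : ℝ → ℚ) (σ : ℚ → ℝ → ℚ)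
    (hσ₀ : ∀ a : ℝ, a < (σ₀ a : ℝ))
    (hσ : ∀ (β : ℚ) (a : ℝ), a < (β : ℝ) → a < (σ β a : ℝ) ∧ σ β a < β)
    (W : Set ℝ) (hW : ¬ W.Countable) :
    ∃ x ∈ W, ∃ a : ℕ → ℝ, ∃ B : ℕ → ℚ, StrictMono a ∧
      B 0 = σ₀ (a 0) ∧ (∀ n, B (n + 1) = σ (B n) (a (n + 1))) ∧
      (a 0 < x ∧ x < (B 0 : ℝ)) ∧
      (∀ n, a (n + 1) < x ∧ x < (B (n + 1) : ℝ)) := by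
  classical
  -- the bad set
  set Bad : Set ℝ :=
    (⋃ c : ℚ, {x : ℝ | (c : ℝ) < x ∧ x < (σ₀ x : ℝ) ∧
        ∀ a : ℝ, (c : ℝ) < a → a < x → (σ₀ a : ℝ) ≤ x}) ∪
    (⋃ c : ℚ, ⋃ β : ℚ, {x : ℝ | (c : ℝ) < x ∧ x < (σ β x : ℝ) ∧
        ∀ a : ℝ, (c : ℝ) < a → a < x → (σ β a : ℝ) ≤ x}) with hBad
  have hBadC : Bad.Countable := by
    refine Set.Countable.union ?_ ?_
    · exact Set.countable_iUnion fun c => K_countable σ₀ (c : ℝ)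
    · exact Set.countable_iUnion fun c => Set.countable_iUnion fun β => K_countable (σ β) (c : ℝ)
  -- pick x ∈ W \ Bad
  have : ¬ (W ⊆ Bad) := fun h => hW (hBadC.mono h)
  obtain ⟨x, hxW, hxB⟩ := Set.not_subset.mp this
  -- existence of first move
  have hinit : ∃ a₀ : ℝ, a₀ < x ∧ x < (σ₀ a₀ : ℝ) := by
    obtain ⟨c, hc⟩ := exists_rat_lt x
    have hx1 : x ∉ {x : ℝ | (c : ℝ) < x ∧ x < (σ₀ x : ℝ) ∧
        ∀ a : ℝ, (c : ℝ) < a → a < x → (σ₀ a : ℝ) ≤ x} := by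
      intro h; exact hxB (Or.inl (Set.mem_iUnion.mpr ⟨c, h⟩))
    simp only [Set.mem_setOf_eq, not_and, not_forall] at hx1
    obtain ⟨a₀, ha₀c, ha₀x, h⟩ := hx1 hc (hσ₀ x)
    exact ⟨a₀, ha₀x, lt_of_not_ge h⟩
  -- existence of subsequent moves
  have hstep : ∀ (a : ℝ) (B : ℚ), a < x → x < (B : ℝ) →
      ∃ a' : ℝ, a < a' ∧ a' < x ∧ x < (σ B a' : ℝ) := by
    intro a B hax hxB'
    obtain ⟨c, hac, hcx⟩ := exists_rat_btwn hax
    have hx1 : x ∉ {x : ℝ | (c : ℝ) < x ∧ x < (σ B x : ℝ) ∧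
        ∀ a : ℝ, (c : ℝ) < a → a < x → (σ B a : ℝ) ≤ x} := by
      intro h
      exact hxB (Or.inr (Set.mem_iUnion.mpr ⟨c, Set.mem_iUnion.mpr ⟨B, h⟩⟩))
    simp only [Set.mem_setOf_eq, not_and, not_forall] at hx1
    obtain ⟨a', ha'c, ha'x, h⟩ := hx1 hcx (hσ B x hxB').1
    exact ⟨a', hac.trans ha'c, ha'x, lt_of_not_ge h⟩
  choose nxt hnxt1 hnxt2 hnxt3 using hstep
  obtain ⟨a₀, ha₀x, hB₀⟩ := hinit
  -- build the play
  let T := {p : ℝ × ℚ // p.1 < x ∧ x < (p.2 : ℝ)}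
  let step : T → T := fun p =>
    ⟨(nxt p.1.1 p.1.2 p.2.1 p.2.2, σ p.1.2 (nxt p.1.1 p.1.2 p.2.1 p.2.2)),
      hnxt2 _ _ _ _, hnxt3 _ _ _ _⟩
  let f : ℕ → T := fun n => Nat.rec (⟨(a₀, σ₀ a₀), ha₀x, hB₀⟩ : T) (fun _ p => step p) n
  have hf : ∀ n, f (n + 1) = step (f n) := fun n => rfl
  refine ⟨x, hxW, fun n => (f n).1.1, fun n => (f n).1.2, ?_, rfl, fun n => rfl, ?_, ?_⟩
  · apply strictMono_nat_of_lt_succ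
    intro n
    exact hnxt1 (f n).1.1 (f n).1.2 (f n).2.1 (f n).2.2
  · exact ⟨(f 0).2.1, (f 0).2.2⟩
  · exact fun n => ⟨(f (n + 1)).2.1, (f (n + 1)).2.2⟩
end

section
/- Suppose σ : ℝ^{<ω} → ℝ is a strategy for Bob in the Baker game, always producing legal moves. For a finite sequence t = ⟨a_0,…,a_{n−1}⟩ of Alice's moves with σ(t) legal, define E_t = {x : a_{n−1} < x < σ(t) ∧ ∀ a, a_{n−1} < a < x → σ(t⌢⟨a⟩) ≤ x}. If x ∉ E_t for every finite sequence t of moves Alice could have made, then Alice has a counter-play (a_n)_{n∈ℕ}, strictly increasing, such that a_n < x < σ(⟨a_0,…,a_n⟩) for all n; i.e., x remains legal throughout the game against σ. -/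
/-!
Call `x` legal after a position `t` if it exceeds Alice's last move and lies below Bob's last
reply. If `x ∉ E_t` and `x` is legal after `t`, Alice has a legal move `a` after which `x` is
still legal; choosing such a move at every position yields the counter-play.
-/

/-- The elimination set E_t for Bob's strategy σ after Alice's moves t (with the
conventions a₋₁ = −∞ and σ(⟨⟩) = +∞): points that are legal after t but which
every legal reply of Alice allows σ to eliminate. -/
def Et (σ : List ℝ → ℝ) (t : List ℝ) : Set ℝ :=
  {x : ℝ | (∀ l ∈ t.getLast?, l < x) ∧ (t ≠ [] → x < σ t) ∧
    ∀ a : ℝ, (∀ l ∈ t.getLast?, l < a) → a < x → σ (t ++ [a]) ≤ x}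

section Play

variable {α : Type*} (next : List α → α)

def playPositions : ℕ → List α
  | 0 => []
  | n + 1 => playPositions n ++ [next (playPositions n)]

theorem getLast?_playPositions_succ (n : ℕ) :
    (playPositions next (n + 1)).getLast? = some (next (playPositions next n)) := by
  rw [playPositions, List.getLast?_concat]

theorem map_range_playPositions (n : ℕ) :
    (List.range n).map (fun k => next (playPositions next k)) = playPositions next n := by
  induction n with
  | zero => rfl
  | succ n ih => rw [List.range_succ, List.map_append, ih, playPositions, List.map_singleton]

theorem playPositions_induction {P : List α → Prop} (h₀ : P [])
    (hstep : ∀ t, P t → P (t ++ [next t])) (n : ℕ) : P (playPositions next n) := by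
  induction n with
  | zero => exact h₀
  | succ n ih => exact hstep _ ih

end Play

def IsLegalAfter (σ : List ℝ → ℝ) (t : List ℝ) (x : ℝ) : Prop :=
  (∀ l ∈ t.getLast?, l < x) ∧ (t ≠ [] → x < σ t)

theorem isLegalAfter_append_singleton {σ : List ℝ → ℝ} {t : List ℝ} {a x : ℝ} :
    IsLegalAfter σ (t ++ [a]) x ↔ a < x ∧ x < σ (t ++ [a]) := by
  simp [IsLegalAfter]

theorem exists_legal_reply_of_not_mem_Et {σ : List ℝ → ℝ} {t : List ℝ} {x : ℝ}
    (hx : x ∉ Et σ t) (ht : IsLegalAfter σ t x) :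
    ∃ a, (∀ l ∈ t.getLast?, l < a) ∧ IsLegalAfter σ (t ++ [a]) x := by
  by_contra! h
  refine hx ⟨ht.1, ht.2, fun a ha hax => ?_⟩
  by_contra! hσ
  exact h a ha (isLegalAfter_append_singleton.2 ⟨hax, hσ⟩)

/-- If x avoids every elimination set E_t, then Alice has a counter-play keeping
x legal against σ throughout the game. -/
theorem counterplay_of_not_eliminated (σ : List ℝ → ℝ) (x : ℝ)
    (hx : ∀ t : List ℝ, x ∉ Et σ t) :
    ∃ a : ℕ → ℝ, StrictMono a ∧
      ∀ n, a n < x ∧ x < σ ((List.range (n + 1)).map a) := by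
  choose! next hnext_gt hnext_legal using
    fun t => exists_legal_reply_of_not_mem_Et (σ := σ) (hx t)
  have hlegal : ∀ n, IsLegalAfter σ (playPositions next n) x :=
    playPositions_induction next (by simp [IsLegalAfter]) hnext_legal
  refine ⟨fun n => next (playPositions next n), strictMono_nat_of_lt_succ fun n => ?_,
    fun n => ?_⟩
  · exact hnext_gt _ (hlegal (n + 1)) _ (getLast?_playPositions_succ next n)
  · rw [map_range_playPositions]
    exact isLegalAfter_append_singleton.1 (hlegal (n + 1))
end

section
/- If P is perfect and (a,b) ∩ P is infinite, then there exist two disjoint closed subintervals of (a,b) each meeting P in a perfect set. -/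
open Set Filter

private lemma accPt_Ioo_left {c x : ℝ} (h : c < x) : AccPt c (𝓟 (Set.Ioo c x)) := by
  rw [accPt_principal_iff_clusterPt]
  have : Set.Ioo c x \ {c} = Set.Ioo c x := by
    apply Set.diff_singleton_eq_self
    simp
  rw [this, ← mem_closure_iff_clusterPt, closure_Ioo h.ne]
  exact ⟨le_refl _, h.le⟩

private lemma accPt_Ioo_right {x d : ℝ} (h : x < d) : AccPt d (𝓟 (Set.Ioo x d)) := by
  rw [accPt_principal_iff_clusterPt]
  have : Set.Ioo x d \ {d} = Set.Ioo x d := by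
    apply Set.diff_singleton_eq_self
    simp
  rw [this, ← mem_closure_iff_clusterPt, closure_Ioo h.ne]
  exact ⟨h.le, le_refl _⟩

/-- Around any point of a perfect set inside an open interval, we can find a
closed subinterval meeting `P` in a perfect set. -/
private lemma perfect_local (P : Set ℝ) (hP : Perfect P) (a b x : ℝ)
    (hax : a < x) (hxb : x < b) (hx : x ∈ P) :
    ∃ c d : ℝ, a < c ∧ c < x ∧ x < d ∧ d < b ∧ Perfect (P ∩ Set.Icc c d) := by
  -- choose a good left endpoint
  have hleft : ∃ c, a < c ∧ c < x ∧ (c ∉ P ∨ Set.Ioo c x ⊆ P) := by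
    by_cases h : ∃ c ∈ Set.Ioo a x, c ∉ P
    · obtain ⟨c, hc, hcP⟩ := h
      exact ⟨c, hc.1, hc.2, Or.inl hcP⟩
    · push_neg at h
      refine ⟨(a + x) / 2, by linarith, by linarith, Or.inr ?_⟩
      intro y hy
      exact h y ⟨by linarith [hy.1], hy.2⟩
  have hright : ∃ d, x < d ∧ d < b ∧ (d ∉ P ∨ Set.Ioo x d ⊆ P) := by
    by_cases h : ∃ d ∈ Set.Ioo x b, d ∉ P
    · obtain ⟨d, hd, hdP⟩ := h
      exact ⟨d, hd.1, hd.2, Or.inl hdP⟩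
    · push_neg at h
      refine ⟨(x + b) / 2, by linarith, by linarith, Or.inr ?_⟩
      intro y hy
      exact h y ⟨hy.1, by linarith [hy.2]⟩
  obtain ⟨c, hac, hcx, hcgood⟩ := hleft
  obtain ⟨d, hxd, hdb, hdgood⟩ := hright
  refine ⟨c, d, hac, hcx, hxd, hdb, ⟨hP.closed.inter isClosed_Icc, ?_⟩⟩
  rintro z ⟨hzP, hzc, hzd⟩
  rcases lt_or_eq_of_le hzc with h1 | h1
  · rcases lt_or_eq_of_le hzd with h2 | h2
    · -- interior point
      have := (hP.acc z hzP).nhds_inter (Ioo_mem_nhds h1 h2)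
      apply this.mono
      rw [principal_mono]
      rintro y ⟨hy1, hy2⟩
      exact ⟨hy2, hy1.1.le, hy1.2.le⟩
    · -- z = d
      subst h2
      rcases hdgood with hd | hd
      · exact absurd hzP hd
      · apply (accPt_Ioo_right hxd).mono
        rw [principal_mono]
        intro y hy
        exact ⟨hd hy, by constructor <;> [linarith [hy.1]; linarith [hy.2]]⟩
  · -- z = c
    subst h1
    rcases hcgood with hc | hc
    · exact absurd hzP hc
    · apply (accPt_Ioo_left hcx).mono
      rw [principal_mono]
      intro y hy
      exact ⟨hc hy, by constructor <;> [linarith [hy.1]; linarith [hy.2]]⟩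

/-- Splitting lemma for perfect sets: if P is perfect and meets the open interval
(a, b) in an infinite set, then (a, b) contains two disjoint closed subintervals,
each meeting P in a nonempty perfect set. -/
theorem perfect_splitting (P : Set ℝ) (hP : Perfect P) (a b : ℝ) (hab : a < b)
    (hinf : (Set.Ioo a b ∩ P).Infinite) :
    ∃ c d c' d' : ℝ, c ≤ d ∧ c' ≤ d' ∧
      Set.Icc c d ⊆ Set.Ioo a b ∧ Set.Icc c' d' ⊆ Set.Ioo a b ∧
      Disjoint (Set.Icc c d) (Set.Icc c' d') ∧
      Perfect (P ∩ Set.Icc c d) ∧ (P ∩ Set.Icc c d).Nonempty ∧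
      Perfect (P ∩ Set.Icc c' d') ∧ (P ∩ Set.Icc c' d').Nonempty := by
  obtain ⟨x, hx, y, hy, hxy⟩ := hinf.nontrivial
  -- wlog x < y
  wlog hlt : x < y generalizing x y
  · exact this y hy x hx hxy.symm (lt_of_le_of_ne (not_lt.mp hlt) hxy.symm)
  set m := (x + y) / 2 with hm
  have hxm : x < m := by simp [hm]; linarith
  have hmy : m < y := by simp [hm]; linarith
  obtain ⟨c, d, h1, h2, h3, h4, hperf⟩ :=
    perfect_local P hP a m x hx.1.1 hxm hx.2
  obtain ⟨c', d', h1', h2', h3', h4', hperf'⟩ :=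
    perfect_local P hP m b y hmy hy.1.2 hy.2
  refine ⟨c, d, c', d', by linarith, by linarith, ?_, ?_, ?_, hperf,
    ⟨x, hx.2, h2.le, h3.le⟩, hperf', ⟨y, hy.2, h2'.le, h3'.le⟩⟩
  · intro z hz
    exact ⟨lt_of_lt_of_le h1 hz.1, lt_of_le_of_lt hz.2 (by linarith [hx.1.2, hy.1.2] : d < b)⟩
  · intro z hz
    exact ⟨by linarith [hz.1, hx.1.1], lt_of_le_of_lt hz.2 h4'⟩
  · apply Set.disjoint_left.mpr
    rintro z ⟨_, hzd⟩ ⟨hzc', _⟩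
    linarith
end
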